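/- Let E be an equivalence relation on Cantor space represented by a swap-closed triple tree T, and let C ⊆ 2^ω be a nonempty perfect set (closed and without isolated points) such that any two distinct elements of C are E-inequivalent. Then there exists a countable ordinal α such that for all X, Y ∈ C with X ≠ Y, it is not the case that rk(T̂_{X,Y}) ≥ α; that is, all distinct elements of C are pairwise E_α-inequivalent for this single α < ω₁. -/

import Mathlib

open MeasureTheory

/-- Cantor space `2^ω`. -/
abbrev Cantor : Type := ℕ → Bool

/-- Triples `(σ, s, τ)` of finite sequences: `σ, τ` Boolean-valued, `s` natural-number valued. -/
abbrev Trip : Type := List Bool × List ℕ × List Bool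

/-- A *triple tree*: a set of equal-length triples of finite sequences which is prefix-closed
(simultaneously restricting all three coordinates to a common shorter length stays in the set). -/
def IsTripleTree (T : Set Trip) : Prop :=
  (∀ p ∈ T, p.2.1.length = p.1.length ∧ p.2.2.length = p.1.length) ∧
  (∀ p ∈ T, ∀ n : ℕ, (p.1.take n, p.2.1.take n, p.2.2.take n) ∈ T)

/-- The restriction `X↾n` of `X : 2^ω` to its first `n` values, as a finite sequence. -/
def res (X : Cantor) (n : ℕ) : List Bool := (List.range n).map X

/-- `T` represents the relation `E` on Cantor space: `X E Y` iff there is `f : ℕ → ℕ`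
with `(X↾n, f↾n, Y↾n) ∈ T` for every `n`. -/
def Represents (T : Set Trip) (E : Set (Cantor × Cantor)) : Prop :=
  ∀ X Y : Cantor,
    (X, Y) ∈ E ↔ ∃ f : ℕ → ℕ, ∀ n : ℕ, (res X n, (List.range n).map f, res Y n) ∈ T

/-- A triple tree is swap-closed if `(σ, s, τ) ∈ T ↔ (τ, s, σ) ∈ T`. -/
def SwapClosed (T : Set Trip) : Prop :=
  ∀ (σ : List Bool) (s : List ℕ) (τ : List Bool), (σ, s, τ) ∈ T ↔ (τ, s, σ) ∈ T

/-- Nodes of the trees `T^k_{X,Y}`: a node of length `n` is a tuple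
`(s₁, t₁, s₂, t₂, …, t_{k-1}, s_k)` with each `sᵢ ∈ ℕ^n`, `tⱼ ∈ Bool^n`, encoded
"transposed", as a list of length `n` whose `m`-th entry collects the `m`-th values
`((s₁ m, …, s_k m), (t₁ m, …, t_{k-1} m))`. -/
abbrev KNode : Type := List (List ℕ × List Bool)

/-- The sequence `s_{i+1} ∈ ℕ^n` (for `0 ≤ i < k`) encoded in a node `u`. -/
def col1 (u : KNode) (i : ℕ) : List ℕ := u.map fun e => e.1.getD i 0

/-- The sequence `t_{j+1} ∈ Bool^n` (for `0 ≤ j < k-1`) encoded in a node `u`. -/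
def col2 (u : KNode) (j : ℕ) : List Bool := u.map fun e => e.2.getD j false

/-- The `i`-th boundary sequence (`0 ≤ i ≤ k`): `X↾n` for `i = 0`, `Y↾n` for `i = k`,
and `t_i` for `0 < i < k`. -/
def bdry (X Y : Cantor) (k : ℕ) (u : KNode) (i : ℕ) : List Bool :=
  if i = 0 then res X u.length else if i = k then res Y u.length else col2 u (i - 1)

/-- The tree `T^k_{X,Y}`: nodes of length `n` are tuples `(s₁, t₁, …, t_{k-1}, s_k)` with
`(X↾n, s₁, t₁) ∈ T`, `(t₁, s₂, t₂) ∈ T`, …, `(t_{k-1}, s_k, Y↾n) ∈ T`. -/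
def TkTree (T : Set Trip) (X Y : Cantor) (k : ℕ) : Set KNode :=
  {u | (∀ e ∈ u, e.1.length = k ∧ e.2.length = k - 1) ∧
       ∀ i < k, (bdry X Y k u i, col1 u i, bdry X Y k u (i + 1)) ∈ T}

/-- Nodes of `T̂_{X,Y}`: the root (`none`), together with pairs `(k, u)`. -/
abbrev HatNode : Type := Option (ℕ × KNode)

/-- The tree `T̂_{X,Y}`: the disjoint union of the trees `T^k_{X,Y}` (`k ≥ 1`) with all the
roots identified: the root together with all pairs `(k, u)` with `u` a nonempty node
of `T^k_{X,Y}`. -/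
def HatTree (T : Set Trip) (X Y : Cantor) : Set HatNode :=
  {p | p = none ∨ ∃ k u, p = some (k, u) ∧ 1 ≤ k ∧ u ≠ [] ∧ u ∈ TkTree T X Y k}

/-- Proper (coordinatewise) prefix order on finite sequences. -/
def ListLt {A : Type*} (u v : List A) : Prop := u <+: v ∧ u ≠ v

/-- `HatLt p q`: the node `q` of `T̂` properly extends the node `p`: every node properly
extends the root, and `(k', u')` properly extends `(k, u)` iff `k = k'` and `u` is a proper
prefix of `u'`. -/
def HatLt : HatNode → HatNode → Prop
  | none, some _ => True
  | some (k, u), some (k', u') => k = k' ∧ ListLt u u'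
  | _, none => False

/-- `RankGe S lt u α`: the rank of the node `u` in the tree `(S, lt)` is `≥ α`, defined by
transfinite recursion: for every `β < α` there is a node `v ∈ S` properly extending `u`
(i.e. `lt u v`) whose rank is `≥ β`. -/
def RankGe {A : Type*} (S : Set A) (lt : A → A → Prop) (u : A) (α : Ordinal.{0}) : Prop :=
  ∀ β : Ordinal.{0}, β < α → ∃ v, v ∈ S ∧ lt u v ∧ RankGe S lt v β
termination_by α

/-- `rk(T̂_{X,Y}) ≥ α`: the root belongs to the tree and its rank is `≥ α`. -/
def HatRankGe (T : Set Trip) (X Y : Cantor) (α : Ordinal.{0}) : Prop :=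
  none ∈ HatTree T X Y ∧ RankGe (HatTree T X Y) HatLt none α

/-- `rk(T^k_{X,Y}) ≥ α`: the root (the empty tuple) belongs to the tree and its rank is `≥ α`. -/
def TkRankGe (T : Set Trip) (X Y : Cantor) (k : ℕ) (α : Ordinal.{0}) : Prop :=
  ([] : KNode) ∈ TkTree T X Y k ∧ RankGe (TkTree T X Y k) ListLt [] α

/-
Call a node `(k, X↾n, Y↾n, u)`, with `X, Y ∈ C`, `X↾n ≠ Y↾n`, `k ≥ 1` and `u ∈ T^k_{X,Y}` of
length `n`, an approximation, ordered by simultaneous proper extension. Because `C` is closed,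
an infinite increasing chain of approximations converges to distinct `X, Y ∈ C` together with an
infinite branch of `T^k_{X,Y}`, i.e. an `E`-chain `X E Z₁ E ⋯ E Y`; this is excluded, so the
approximations form a well-founded relation on a countable set and all their ranks are below some
`σ < ω₁`. For distinct `X, Y ∈ C`, once a node `(k, u)` of `T̂_{X,Y}` is past the first position
where `X` and `Y` differ, its rank is bounded by the rank of the approximation
`(k, X↾|u|, Y↾|u|, u)`, hence by `σ`. As such nodes sit at finite depth, `rk(T̂_{X,Y}) < σ + ω`.
-/

open Ordinal Relation Filter

section Rank

variable {A : Type*} {S : Set A} {lt : A → A → Prop}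

theorem rankGe_iff {u : A} {α : Ordinal.{0}} :
    RankGe S lt u α ↔ ∀ β < α, ∃ v ∈ S, lt u v ∧ RankGe S lt v β := by
  rw [RankGe]

theorem RankGe.mono {u : A} {α β : Ordinal.{0}} (h : RankGe S lt u α) (hβ : β ≤ α) :
    RankGe S lt u β :=
  rankGe_iff.2 fun γ hγ => rankGe_iff.1 h γ (hγ.trans_le hβ)

theorem RankGe.exists_of_succ {u : A} {α : Ordinal.{0}} (h : RankGe S lt u (Order.succ α)) :
    ∃ v ∈ S, lt u v ∧ RankGe S lt v α :=
  rankGe_iff.1 h α (Order.lt_succ α)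

theorem RankGe.exists_add_nat (h : A → ℕ) (hh : ∀ u v, v ∈ S → lt u v → h u < h v)
    (δ : Ordinal.{0}) (n : ℕ) {u : A} (hu : u ∈ S) (hr : RankGe S lt u (δ + n)) :
    ∃ v ∈ S, h u + n ≤ h v ∧ RankGe S lt v δ := by
  induction n generalizing u with
  | zero => exact ⟨u, hu, le_rfl, by simpa using hr⟩
  | succ n ih =>
    rw [Nat.cast_succ, ← add_assoc, ← Order.succ_eq_add_one] at hr
    obtain ⟨w, hw, huw, hwr⟩ := hr.exists_of_succ
    obtain ⟨v, hv, hwv, hvr⟩ := ih hw hwr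
    exact ⟨v, hv, by have := hh u w hw huw; omega, hvr⟩

theorem RankGe.le_rank {B : Type} {r : B → B → Prop} [IsWellFounded B r] (φ : A → B)
    {P : A → Prop} (hP : ∀ u v, P u → v ∈ S → lt u v → P v)
    (hφ : ∀ u v, u ∈ S → P u → v ∈ S → lt u v → r (φ v) (φ u)) (γ : Ordinal.{0}) {u : A}
    (hu : u ∈ S) (hPu : P u) (h : RankGe S lt u γ) : γ ≤ IsWellFounded.rank r (φ u) := by
  induction γ using WellFoundedLT.induction generalizing u with
  | _ γ ih =>
    refine le_of_forall_lt fun β hβ => ?_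
    obtain ⟨v, hv, huv, hvr⟩ := rankGe_iff.1 h β hβ
    exact (ih β hβ hv (hP u v hPu hv huv) hvr).trans_lt
      (IsWellFounded.rank_lt_of_rel (hφ u v hu hPu hv huv))

end Rank

theorem IsWellFounded.exists_forall_rank_lt_omega_one {B : Type} [Countable B]
    (r : B → B → Prop) [IsWellFounded B r] : ∃ σ < ω₁, ∀ b, IsWellFounded.rank r b < σ := by
  have hlt : ∀ b, IsWellFounded.rank r b < ω₁ := fun b => by
    induction b using IsWellFounded.induction r with
    | _ b ih =>
      rw [IsWellFounded.rank_eq]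
      exact iSup_lt_omega_one fun c => (Cardinal.isSuccLimit_omega 1).succ_lt (ih c c.2)
  exact ⟨⨆ b, Order.succ (IsWellFounded.rank r b),
    iSup_lt_omega_one fun b => (Cardinal.isSuccLimit_omega 1).succ_lt (hlt b),
    fun b => (Order.lt_succ _).trans_le
      (Ordinal.le_iSup (fun b => Order.succ (IsWellFounded.rank r b)) b)⟩

theorem List.exists_eq_map_range_of_isPrefix_succ {α : Type*} [Inhabited α] {l : ℕ → List α}
    (hl : ∀ n, l n <+: l (n + 1)) : ∃ x : ℕ → α, ∀ n, l n = (List.range (l n).length).map x := by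
  classical
  have hmono : ∀ {m n}, m ≤ n → l m <+: l n := fun hmn =>
    Nat.le_induction (List.prefix_refl _) (fun n _ ih => ih.trans (hl n)) _ hmn
  refine ⟨fun i => if h : ∃ n, i < (l n).length then (l (Nat.find h))[i]'(Nat.find_spec h)
    else default, fun n => List.ext_getElem (by simp) fun i hi _ => ?_⟩
  have h : ∃ n, i < (l n).length := ⟨n, hi⟩
  simp only [List.getElem_map, List.getElem_range, dif_pos h]
  rcases le_total n (Nat.find h) with hle | hle
  · exact (hmono hle).getElem hi
  · exact ((hmono hle).getElem _).symm

section Restriction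

variable {X Y : Cantor} {m n : ℕ}

@[simp]
theorem length_res : (res X n).length = n := by simp [res]

theorem take_res : (res X n).take m = res X (min m n) := by
  simp [res, ← List.map_take, List.take_range]

theorem res_prefix_res (h : m ≤ n) : res X m <+: res X n := by
  rw [← min_eq_left h, ← take_res]
  exact List.take_prefix _ _

theorem res_eq_res_iff : res X n = res Y n ↔ ∀ i < n, X i = Y i := by
  simp [res, List.map_inj_left]

theorem res_ne_res_of_le (h : m ≤ n) (hne : res X m ≠ res Y m) : res X n ≠ res Y n := by
  simp only [ne_eq, res_eq_res_iff, not_forall] at hne ⊢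
  obtain ⟨i, hi, hXY⟩ := hne
  exact ⟨i, by omega, hXY⟩

theorem IsClosed.mem_of_forall_res {C : Set Cantor} (hC : IsClosed C)
    (h : ∀ n, ∃ Z ∈ C, res Z n = res X n) : X ∈ C := by
  choose Z hZC hZ using h
  refine hC.mem_of_tendsto (b := atTop) (tendsto_pi_nhds.2 fun i => ?_)
    (Eventually.of_forall hZC)
  refine tendsto_const_nhds.congr' ((eventually_gt_atTop i).mono fun n hn => ?_)
  exact (res_eq_res_iff.1 (hZ n) i hn).symm

end Restriction

theorem ListLt.length_lt {α : Type*} {l₁ l₂ : List α} (h : ListLt l₁ l₂) :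
    l₁.length < l₂.length :=
  h.1.length_le.lt_of_ne fun hlen => h.2 (h.1.eq_of_length hlen)

section Composition

variable {T : Set Trip} {X Y : Cantor} {k : ℕ}

theorem take_mem_tkTree (hT : IsTripleTree T) {u : KNode} (hu : u ∈ TkTree T X Y k) (n : ℕ) :
    u.take n ∈ TkTree T X Y k := by
  refine ⟨fun e he => hu.1 e (List.mem_of_mem_take he), fun i hi => ?_⟩
  have hbdry : ∀ j, bdry X Y k (u.take n) j = (bdry X Y k u j).take n := by
    intro j
    simp only [bdry, List.length_take]
    split_ifs <;> simp [take_res, col2, List.map_take]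
  simpa [hbdry, col1, List.map_take] using hT.2 _ (hu.2 i hi) n

theorem mem_tkTree_congr {X' Y' : Cantor} {u : KNode} (hX : res X u.length = res X' u.length)
    (hY : res Y u.length = res Y' u.length) : u ∈ TkTree T X Y k ↔ u ∈ TkTree T X' Y' k := by
  have hbdry : bdry X Y k u = bdry X' Y' k u := funext fun i => by simp only [bdry, hX, hY]
  simp only [TkTree, Set.mem_ofPred_eq, hbdry]

def HasBranch {α : Type*} (S : Set (List α)) : Prop :=
  ∃ x : ℕ → α, ∀ n, (List.range n).map x ∈ S

theorem reflTransGen_of_hasBranch_tkTree {E : Set (Cantor × Cantor)} (hrep : Represents T E)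
    (hk : 1 ≤ k) (h : HasBranch (TkTree T X Y k)) :
    ReflTransGen (fun X Y => (X, Y) ∈ E) X Y := by
  obtain ⟨U, hU⟩ := h
  let Z : ℕ → Cantor := fun i =>
    if i = 0 then X else if i = k then Y else fun m => (U m).2.getD (i - 1) false
  have hZ : ∀ i n, bdry X Y k ((List.range n).map U) i = res (Z i) n := by
    intro i n
    simp only [bdry, Z, List.length_map, List.length_range]
    split_ifs <;> simp [col2, res]
  have hstep : ∀ i < k, (Z i, Z (i + 1)) ∈ E := fun i hi =>
    (hrep _ _).2 ⟨fun m => (U m).1.getD i 0, fun n => by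
      simpa [hZ, col1, Function.comp_def] using (hU n).2 i hi⟩
  have hchain : ∀ i ≤ k, ReflTransGen (fun X Y => (X, Y) ∈ E) X (Z i) := by
    intro i hi
    induction i with
    | zero => exact ReflTransGen.refl
    | succ i ih => exact (ih (by omega)).tail (hstep i (by omega))
  simpa [Z, show k ≠ 0 by omega] using hchain k le_rfl

end Composition

section Approximation

variable {T : Set Trip} {C : Set Cantor} {X Y : Cantor}

def hatLength : HatNode → ℕ
  | none => 0
  | some (_, u) => u.length

theorem mem_hatTree_some {k : ℕ} {u : KNode} :
    some (k, u) ∈ HatTree T X Y ↔ 1 ≤ k ∧ u ≠ [] ∧ u ∈ TkTree T X Y k := by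
  simp [HatTree]

theorem hatLength_lt_of_hatLt {p q : HatNode} (hq : q ∈ HatTree T X Y) (h : HatLt p q) :
    hatLength p < hatLength q := by
  rcases p with _ | ⟨k, u⟩ <;> rcases q with _ | ⟨k', u'⟩
  · exact h.elim
  · exact List.length_pos_iff.2 (mem_hatTree_some.1 hq).2.1
  · exact h.elim
  · exact h.2.length_lt

def approxSet (T : Set Trip) (C : Set Cantor) : Set (ℕ × List Bool × List Bool × KNode) :=
  {w | ∃ X ∈ C, ∃ Y ∈ C, ∃ k u, 1 ≤ k ∧ u ∈ TkTree T X Y k ∧ res X u.length ≠ res Y u.length ∧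
    w = (k, res X u.length, res Y u.length, u)}

def ApproxRel (T : Set Trip) (C : Set Cantor) (w v : ℕ × List Bool × List Bool × KNode) : Prop :=
  w ∈ approxSet T C ∧ v ∈ approxSet T C ∧
    w.1 = v.1 ∧ v.2.1 <+: w.2.1 ∧ v.2.2.1 <+: w.2.2.1 ∧ ListLt v.2.2.2 w.2.2.2

def hatApprox (X Y : Cantor) : HatNode → ℕ × List Bool × List Bool × KNode
  | none => (0, [], [], []) -- junk: the root is never distinguishing, as `X↾0 = Y↾0`
  | some (k, u) => (k, res X u.length, res Y u.length, u)

theorem hatApprox_mem_approxSet (hX : X ∈ C) (hY : Y ∈ C) {p : HatNode}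
    (hp : p ∈ HatTree T X Y) (hne : res X (hatLength p) ≠ res Y (hatLength p)) :
    hatApprox X Y p ∈ approxSet T C := by
  rcases p with _ | ⟨k, u⟩
  · simp [hatLength, res] at hne
  · obtain ⟨hk, -, hu⟩ := mem_hatTree_some.1 hp
    exact ⟨X, hX, Y, hY, k, u, hk, hu, hne, rfl⟩

theorem approxRel_hatApprox (hX : X ∈ C) (hY : Y ∈ C) {p q : HatNode} (hp : p ∈ HatTree T X Y)
    (hne : res X (hatLength p) ≠ res Y (hatLength p)) (hq : q ∈ HatTree T X Y)
    (hpq : HatLt p q) : ApproxRel T C (hatApprox X Y q) (hatApprox X Y p) := by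
  have hlen := hatLength_lt_of_hatLt hq hpq
  refine ⟨hatApprox_mem_approxSet hX hY hq (res_ne_res_of_le hlen.le hne),
    hatApprox_mem_approxSet hX hY hp hne, ?_⟩
  rcases p with _ | ⟨k, u⟩ <;> rcases q with _ | ⟨k', u'⟩
  · exact hpq.elim
  · simp [hatLength, res] at hne
  · exact hpq.elim
  · obtain ⟨rfl, hlt⟩ := hpq
    exact ⟨rfl, res_prefix_res hlt.1.length_le, res_prefix_res hlt.1.length_le, hlt⟩

theorem wellFounded_approxRel (hT : IsTripleTree T) (hC : IsClosed C)
    (hsep : ∀ X ∈ C, ∀ Y ∈ C, X ≠ Y → ∀ k, 1 ≤ k → ¬ HasBranch (TkTree T X Y k)) :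
    WellFounded (ApproxRel T C) := by
  rw [wellFounded_iff_isEmpty_descending_chain]
  refine ⟨fun ⟨w, hw⟩ => ?_⟩
  choose X hX Y hY k u hk hu hne hwn using fun n => (hw n).2.1
  have hstep : ∀ n, k (n + 1) = k n ∧
      res (X n) (u n).length <+: res (X (n + 1)) (u (n + 1)).length ∧
      res (Y n) (u n).length <+: res (Y (n + 1)) (u (n + 1)).length ∧
      ListLt (u n) (u (n + 1)) :=
    fun n => by simpa [ApproxRel, hwn] using (hw n).2.2
  have hk0 : ∀ n, k n = k 0 := fun n => by
    induction n with
    | zero => rfl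
    | succ n ih => rw [(hstep n).1, ih]
  have hlen : ∀ n, n ≤ (u n).length := fun n => by
    induction n with
    | zero => exact Nat.zero_le _
    | succ n ih => exact ih.trans_lt (hstep n).2.2.2.length_lt
  obtain ⟨U, hU⟩ := List.exists_eq_map_range_of_isPrefix_succ fun n => (hstep n).2.2.2.1
  obtain ⟨X', hX'⟩ := List.exists_eq_map_range_of_isPrefix_succ fun n => (hstep n).2.1
  obtain ⟨Y', hY'⟩ := List.exists_eq_map_range_of_isPrefix_succ fun n => (hstep n).2.2.1
  simp only [length_res] at hX' hY'
  change ∀ n, res (X n) (u n).length = res X' (u n).length at hX'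
  change ∀ n, res (Y n) (u n).length = res Y' (u n).length at hY'
  have hlimit : ∀ {Z : ℕ → Cantor} {Z' : Cantor}, (∀ n, Z n ∈ C) →
      (∀ n, res (Z n) (u n).length = res Z' (u n).length) → Z' ∈ C := fun hZ hZ' =>
    hC.mem_of_forall_res fun n => ⟨_, hZ n, by
      simpa [take_res, min_eq_left (hlen n)] using congrArg (List.take n) (hZ' n)⟩
  refine hsep X' (hlimit hX hX') Y' (hlimit hY hY') (fun h => hne 0 (by rw [hX', hY', h]))
    (k 0) (hk 0) ⟨U, fun n => ?_⟩
  have hun : (List.range n).map U = (u n).take n := by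
    rw [hU n, ← List.map_take, List.take_range, min_eq_left (hlen n)]
  rw [hun]
  refine take_mem_tkTree hT ((mem_tkTree_congr (hX' n) (hY' n)).1 ?_) n
  exact hk0 n ▸ hu n

end Approximation

theorem statement13_general (E : Set (Cantor × Cantor)) (T : Set Trip)
    (hT : IsTripleTree T) (hrep : Represents T E)
    (hE : Equivalence fun X Y : Cantor => (X, Y) ∈ E)
    (C : Set Cantor) (hC : Perfect C)
    (hineq : ∀ X ∈ C, ∀ Y ∈ C, X ≠ Y → (X, Y) ∉ E) :
    ∃ α : Ordinal.{0}, α < (Cardinal.aleph 1).ord ∧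
      ∀ X ∈ C, ∀ Y ∈ C, X ≠ Y → ¬ HatRankGe T X Y α := by
  have : IsWellFounded _ (ApproxRel T C) := ⟨wellFounded_approxRel hT hC.closed
    fun X hX Y hY hne _ hk hbranch => hineq X hX Y hY hne <|
      reflTransGen_le_of_equivalence_of_le hE le_rfl X Y
        (reflTransGen_of_hasBranch_tkTree hrep hk hbranch)⟩
  obtain ⟨σ, hσ, hrank⟩ := IsWellFounded.exists_forall_rank_lt_omega_one (ApproxRel T C)
  rw [Cardinal.ord_aleph]
  refine ⟨σ + ω, isPrincipal_add_omega 1 hσ omega0_lt_omega_one, ?_⟩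
  rintro X hX Y hY hne ⟨hroot, hrk⟩
  obtain ⟨m, hm⟩ := Function.ne_iff.mp hne
  have hrkm := hrk.mono (add_le_add_right (natCast_lt_omega0 (m + 1)).le σ)
  obtain ⟨p, hp, hlen, hpr⟩ := hrkm.exists_add_nat hatLength
    (fun _ _ hq h => hatLength_lt_of_hatLt hq h) σ (m + 1) hroot
  have hpne : res X (hatLength p) ≠ res Y (hatLength p) := fun h =>
    hm (res_eq_res_iff.1 h m (by simpa [hatLength] using hlen))
  have hσle : σ ≤ IsWellFounded.rank (ApproxRel T C) (hatApprox X Y p) :=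
    hpr.le_rank (hatApprox X Y)
      (fun _ _ hne hq h => res_ne_res_of_le (hatLength_lt_of_hatLt hq h).le hne)
      (fun _ _ hp hne hq h => approxRel_hatApprox hX hY hp hne hq h) σ hp hpne
  exact (hrank _).not_ge hσle

/-- Let `E` be an equivalence relation on Cantor space represented by a
swap-closed triple tree `T`, and let `C` be a nonempty perfect set all of whose distinct
elements are pairwise `E`-inequivalent. Then there is a single countable ordinal `α` such
that for all distinct `X, Y ∈ C`, `rk(T̂_{X,Y}) ≥ α` fails; i.e. all distinct elements of
`C` are pairwise `E_α`-inequivalent. -/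
theorem statement13 (E : Set (Cantor × Cantor)) (T : Set Trip)
    (hT : IsTripleTree T) (hswap : SwapClosed T) (hrep : Represents T E)
    (hE : Equivalence fun X Y : Cantor => (X, Y) ∈ E)
    (C : Set Cantor) (hCne : C.Nonempty) (hC : Perfect C)
    (hineq : ∀ X ∈ C, ∀ Y ∈ C, X ≠ Y → (X, Y) ∉ E) :
    ∃ α : Ordinal.{0}, α < (Cardinal.aleph 1).ord ∧
      ∀ X ∈ C, ∀ Y ∈ C, X ≠ Y → ¬ HatRankGe T X Y α :=
  statement13_general E T hT hrep hE C hC hineq
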